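/- arXiv:2303.10006 — 4 statements merged into one kernel-verified Lean document; each statement's English description precedes it below -/
import Mathlib

section
/- Let V_f : X → ℝ≥0 and ℓ̄ : X → ℝ≥0 with c₁|x - x_r|² ≤ ℓ̄(x) ≤ c₂|x - x_r|² for constants c₂ ≥ c₁ > 0, and suppose a map κ : X → X satisfies V_f(κ(x)) - V_f(x) ≤ -ℓ̄(x) and V_f(x) ≤ c_f·ℓ̄(x) for all x in an invariant set X_f (κ(X_f) ⊆ X_f), with c_f ≥ 1. Then for any x ∈ X_f, the iterates x(k) = κᵏ(x) satisfy |x(k) - x_r|² ≤ (c_f·c₂/c₁)·|x - x_r|²·(1 - c₁/(c_f·c₂))ᵏ for all k ∈ ℕ. -/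
/-- Exponential decay under the terminal controller: terminal cost decrease and
upper bound combined with quadratic stage cost bounds give
`|κᵏ(x) - x_r|² ≤ (c_f c₂/c₁) |x - x_r|² (1 - c₁/(c_f c₂))ᵏ` inside the terminal set. -/
theorem terminal_controller_exponential_decay {n : ℕ}
    (Xf : Set (EuclideanSpace ℝ (Fin n))) (xr : EuclideanSpace ℝ (Fin n))
    (Vf ℓbar : EuclideanSpace ℝ (Fin n) → ℝ)
    (κ : EuclideanSpace ℝ (Fin n) → EuclideanSpace ℝ (Fin n))
    (c1 c2 cf : ℝ) (hc1 : 0 < c1) (hc12 : c1 ≤ c2) (hcf : 1 ≤ cf)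
    (hVnn : ∀ x ∈ Xf, 0 ≤ Vf x) (hℓnn : ∀ x ∈ Xf, 0 ≤ ℓbar x)
    (hℓlo : ∀ x ∈ Xf, c1 * ‖x - xr‖ ^ 2 ≤ ℓbar x)
    (hℓup : ∀ x ∈ Xf, ℓbar x ≤ c2 * ‖x - xr‖ ^ 2)
    (hinv : ∀ x ∈ Xf, κ x ∈ Xf)
    (hdec : ∀ x ∈ Xf, Vf (κ x) - Vf x ≤ -ℓbar x)
    (hub : ∀ x ∈ Xf, Vf x ≤ cf * ℓbar x) :
    ∀ x ∈ Xf, ∀ k : ℕ,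
      ‖κ^[k] x - xr‖ ^ 2 ≤ (cf * c2 / c1) * ‖x - xr‖ ^ 2 * (1 - c1 / (cf * c2)) ^ k := by
  intro x hx k
  have hcf0 : (0:ℝ) < cf := lt_of_lt_of_le one_pos hcf
  have hc2 : (0:ℝ) < c2 := lt_of_lt_of_le hc1 hc12
  have hcfc2 : (0:ℝ) < cf * c2 := mul_pos hcf0 hc2
  set ρ : ℝ := 1 - c1 / (cf * c2) with hρ
  have hρ0 : 0 ≤ ρ := by
    have h1 : c1 / (cf * c2) ≤ 1 := by
      rw [div_le_one hcfc2]
      calc c1 ≤ c2 := hc12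
        _ = 1 * c2 := (one_mul c2).symm
        _ ≤ cf * c2 := by nlinarith
    rw [hρ]; linarith
  -- iterates stay in Xf
  have hmem : ∀ m : ℕ, κ^[m] x ∈ Xf := by
    intro m
    induction m with
    | zero => simpa using hx
    | succ m ih => rw [Function.iterate_succ_apply']; exact hinv _ ih
  -- key: single-step decay of Vf
  have hstep : ∀ y ∈ Xf, Vf (κ y) ≤ ρ * Vf y := by
    intro y hy
    have h1 : Vf y ≤ cf * ℓbar y := hub y hy
    have h2 : ℓbar y ≤ c2 * ‖y - xr‖ ^ 2 := hℓup y hy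
    have h3 : c1 * ‖y - xr‖ ^ 2 ≤ ℓbar y := hℓlo y hy
    have h4 : Vf (κ y) - Vf y ≤ -ℓbar y := hdec y hy
    -- c1/(cf*c2) * Vf y ≤ ℓbar y
    have h5 : c1 / (cf * c2) * Vf y ≤ ℓbar y := by
      rw [div_mul_eq_mul_div, div_le_iff₀ hcfc2]
      nlinarith [mul_le_mul_of_nonneg_left h1 hc1.le,
        mul_le_mul_of_nonneg_right hc12 (mul_nonneg hcf0.le (hℓnn y hy))]
    have : Vf (κ y) ≤ Vf y - c1 / (cf * c2) * Vf y := by linarith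
    have heq : Vf y - c1 / (cf * c2) * Vf y = ρ * Vf y := by ring
    linarith [heq ▸ this]
  -- Vf decays geometrically
  have hgeo : ∀ m : ℕ, Vf (κ^[m] x) ≤ ρ ^ m * Vf x := by
    intro m
    induction m with
    | zero => simp
    | succ m ih =>
      rw [Function.iterate_succ_apply']
      calc Vf (κ (κ^[m] x)) ≤ ρ * Vf (κ^[m] x) := hstep _ (hmem m)
        _ ≤ ρ * (ρ ^ m * Vf x) := by
            exact mul_le_mul_of_nonneg_left ih hρ0
        _ = ρ ^ (m + 1) * Vf x := by ring
  -- ℓbar y ≤ Vf y for y ∈ Xf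
  have hℓV : ∀ y ∈ Xf, ℓbar y ≤ Vf y := by
    intro y hy
    have := hdec y hy
    have := hVnn (κ y) (hinv y hy)
    linarith
  -- combine
  have h1 : c1 * ‖κ^[k] x - xr‖ ^ 2 ≤ Vf (κ^[k] x) :=
    le_trans (hℓlo _ (hmem k)) (hℓV _ (hmem k))
  have h2 : Vf x ≤ cf * c2 * ‖x - xr‖ ^ 2 := by
    have := hub x hx
    have := hℓup x hx
    nlinarith
  have h3 : Vf (κ^[k] x) ≤ ρ ^ k * (cf * c2 * ‖x - xr‖ ^ 2) := by
    calc Vf (κ^[k] x) ≤ ρ ^ k * Vf x := hgeo k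
      _ ≤ ρ ^ k * (cf * c2 * ‖x - xr‖ ^ 2) :=
          mul_le_mul_of_nonneg_left h2 (pow_nonneg hρ0 k)
  have := le_trans h1 h3
  rw [div_mul_eq_mul_div, div_mul_eq_mul_div, le_div_iff₀ hc1]
  nlinarith [this]
end

section
/- Suppose c₁|x - x_r|² ≤ V_f(x) ≤ c_f·c₂|x - x_r|² and V_f(κ(x)) ≤ V_f(x) - c₁|x - x_r|² for all x in a κ-invariant set X_f, with c_f·c₂ ≥ c₁ > 0. If additionally |x - x_r| ≤ D for all x ∈ X_f (bounded set), then for every ε > 0 there exists τ ∈ ℕ, depending only on c₁, c₂, c_f, D, ε (and not on x or x_r), such that |κᵗ(x) - x_r| ≤ ε for all t ≥ τ and all x ∈ X_f. -/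
/-- Uniform finite-time reachability of an `ε`-ball around the reference under the
terminal controller: the time `τ` depends only on the constants `c₁, c₂, c_f, D, ε`,
not on the data `X_f, V_f, κ, x_r, x`. -/
theorem uniform_finite_time_reachability {n : ℕ}
    (c1 c2 cf D : ℝ) (hc1 : 0 < c1) (hc2 : 0 < c2) (hcf : 0 < cf)
    (hc1cf : c1 ≤ cf * c2) (hD : 0 < D) :
    ∀ ε > (0:ℝ), ∃ τ : ℕ,
      ∀ (Xf : Set (EuclideanSpace ℝ (Fin n))) (xr : EuclideanSpace ℝ (Fin n))
        (Vf : EuclideanSpace ℝ (Fin n) → ℝ)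
        (κ : EuclideanSpace ℝ (Fin n) → EuclideanSpace ℝ (Fin n)),
        (∀ x ∈ Xf, κ x ∈ Xf) →
        (∀ x ∈ Xf, c1 * ‖x - xr‖ ^ 2 ≤ Vf x) →
        (∀ x ∈ Xf, Vf x ≤ cf * c2 * ‖x - xr‖ ^ 2) →
        (∀ x ∈ Xf, Vf (κ x) ≤ Vf x - c1 * ‖x - xr‖ ^ 2) →
        (∀ x ∈ Xf, ‖x - xr‖ ≤ D) →
        ∀ x ∈ Xf, ∀ t : ℕ, τ ≤ t → ‖κ^[t] x - xr‖ ≤ ε := by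
  intro ε hε
  have hcc : 0 < cf * c2 := mul_pos hcf hc2
  set q : ℝ := 1 - c1 / (cf * c2) with hq
  have hq0 : 0 ≤ q := by
    have : c1 / (cf * c2) ≤ 1 := (div_le_one hcc).mpr hc1cf
    simp only [hq]; linarith
  have hq1 : q < 1 := by
    have : 0 < c1 / (cf * c2) := div_pos hc1 hcc
    simp only [hq]; linarith
  -- choose τ with q^τ * (cf*c2*D^2) < c1 * ε^2
  have hεpos : 0 < c1 * ε ^ 2 / (cf * c2 * D ^ 2) :=
    div_pos (mul_pos hc1 (pow_pos hε 2)) (mul_pos hcc (pow_pos hD 2))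
  obtain ⟨τ, hτ⟩ := exists_pow_lt_of_lt_one hεpos hq1
  refine ⟨τ, ?_⟩
  intro Xf xr Vf κ hinv hlow hup hdec hbd x hx t ht
  -- invariance and decay by induction
  have key : ∀ k : ℕ, κ^[k] x ∈ Xf ∧ Vf (κ^[k] x) ≤ q ^ k * (cf * c2 * D ^ 2) := by
    intro k
    induction k with
    | zero =>
      refine ⟨hx, ?_⟩
      simp only [Function.iterate_zero, id_eq, pow_zero, one_mul]
      calc Vf x ≤ cf * c2 * ‖x - xr‖ ^ 2 := hup x hx
        _ ≤ cf * c2 * D ^ 2 := by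
            have hs : ‖x - xr‖ ^ 2 ≤ D ^ 2 :=
              pow_le_pow_left₀ (norm_nonneg _) (hbd x hx) 2
            exact mul_le_mul_of_nonneg_left hs hcc.le
    | succ k ih =>
      obtain ⟨hmem, hVk⟩ := ih
      refine ⟨by rw [Function.iterate_succ_apply']; exact hinv _ hmem, ?_⟩
      rw [Function.iterate_succ_apply']
      set y := κ^[k] x
      have h1 : Vf (κ y) ≤ Vf y - c1 * ‖y - xr‖ ^ 2 := hdec y hmem
      have h2 : Vf y ≤ cf * c2 * ‖y - xr‖ ^ 2 := hup y hmem
      have h3 : c1 / (cf * c2) * Vf y ≤ c1 * ‖y - xr‖ ^ 2 := by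
        rw [div_mul_eq_mul_div, div_le_iff₀ hcc]
        nlinarith
      have h4 : Vf (κ y) ≤ q * Vf y := by
        simp only [hq]; nlinarith
      calc Vf (κ y) ≤ q * Vf y := h4
        _ ≤ q * (q ^ k * (cf * c2 * D ^ 2)) := by
            exact mul_le_mul_of_nonneg_left hVk hq0
        _ = q ^ (k + 1) * (cf * c2 * D ^ 2) := by ring
  obtain ⟨hmem, hV⟩ := key t
  have hqt : q ^ t ≤ q ^ τ := pow_le_pow_of_le_one hq0 hq1.le ht
  have hlow' := hlow _ hmem
  have hfinal : c1 * ‖κ^[t] x - xr‖ ^ 2 < c1 * ε ^ 2 := by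
    have h5 : q ^ t * (cf * c2 * D ^ 2) < c1 * ε ^ 2 := by
      have h6 : q ^ τ * (cf * c2 * D ^ 2) < c1 * ε ^ 2 := by
        rw [← lt_div_iff₀ (mul_pos hcc (pow_pos hD 2))]; exact hτ
      have h7 : q ^ t * (cf * c2 * D ^ 2) ≤ q ^ τ * (cf * c2 * D ^ 2) :=
        mul_le_mul_of_nonneg_right hqt (by positivity)
      linarith
    linarith
  have h8 : ‖κ^[t] x - xr‖ ^ 2 < ε ^ 2 := lt_of_mul_lt_mul_left hfinal hc1.le
  nlinarith [norm_nonneg (κ^[t] x - xr), hε]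
end

section
/- Let α_lo, α_up : ℝ≥0 → ℝ≥0 be strictly increasing continuous bijections with α_lo(s) ≤ α_up(s), and T : R → ℝ≥0 satisfy α_lo(|r - r_d|) ≤ T(r) ≤ α_up(|r - r_d|) for all r ∈ R. Let λ : ℕ → ℝ≥0 satisfy λ(N) ≥ N for all N, and suppose V_N(x) = J_N(x) + λ(N)·T(r_N(x)) with J_N(x) ≥ 0 and V_N(x) ≤ W for all N ≥ N̄ and x in a set S (W a uniform constant). Then for every κ > 0 there exists N_κ such that for all N ≥ N_κ and all x ∈ S, |r_N(x) - r_d| < κ. That is, r_N(x) → r_d uniformly on S as N → ∞. -/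
/-!
If `r_N(x)` stayed `κ` away from `r_d`, the lower `K∞` bound would give `T(r_N(x)) ≥ α_lo(κ) > 0`,
so the bounded value `V_N(x) ≥ λ(N) T(r_N(x)) ≥ λ(N) α_lo(κ)` would force `λ(N) ≤ W / α_lo(κ)`,
which fails once `λ(N) ≥ N` is large enough.
-/

open NNReal Filter

theorem eventually_forall_lt_of_mul_le {ι α : Type*} {l : Filter ι} {lam : ι → ℝ}
    (hlam : Tendsto lam l atTop) {P : ι → α → ℝ} {S : Set α} {W : ℝ}
    (hP : ∀ᶠ i in l, ∀ x ∈ S, lam i * P i x ≤ W) {c : ℝ} (hc : 0 < c) :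
    ∀ᶠ i in l, ∀ x ∈ S, P i x < c := by
  filter_upwards [hP, hlam.eventually_gt_atTop 0, (hlam.atTop_mul_const hc).eventually_gt_atTop W]
    with i hPi hlam_pos hW x hx
  by_contra! hge
  have : lam i * c ≤ lam i * P i x := mul_le_mul_of_nonneg_left hge hlam_pos.le
  linarith [hPi x hx]

theorem uniform_convergence_artificial_reference_general {α β : Type*} [MetricSpace β]
    (rd : β)
    (αlo αup : ℝ≥0 → ℝ≥0)
    (hlo_mono : StrictMono αlo)
    (T : β → ℝ)
    (hT : ∀ r, (αlo (nndist r rd) : ℝ) ≤ T r ∧ T r ≤ (αup (nndist r rd) : ℝ))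
    (lam : ℕ → ℝ) (hlam : ∀ N : ℕ, (N : ℝ) ≤ lam N)
    (S : Set α) (J V : ℕ → α → ℝ) (rN : ℕ → α → β)
    (Nbar : ℕ) (W : ℝ)
    (hJ : ∀ N x, 0 ≤ J N x)
    (hV : ∀ N x, V N x = J N x + lam N * T (rN N x))
    (hW : ∀ N, Nbar ≤ N → ∀ x ∈ S, V N x ≤ W) :
    ∀ κ > (0:ℝ), ∃ Nκ : ℕ, ∀ N, Nκ ≤ N → ∀ x ∈ S, dist (rN N x) rd < κ := by
  intro κ hκ
  have hlevel : (0 : ℝ) < αlo κ.toNNReal :=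
    NNReal.coe_pos.2 (zero_le.trans_lt (hlo_mono (Real.toNNReal_pos.2 hκ)))
  have hlam_top : Tendsto lam atTop atTop := tendsto_atTop_mono hlam tendsto_natCast_atTop_atTop
  have hbound : ∀ᶠ N in atTop, ∀ x ∈ S, lam N * T (rN N x) ≤ W := by
    filter_upwards [eventually_ge_atTop Nbar] with N hN x hx
    linarith [hV N x, hJ N x, hW N hN x hx]
  obtain ⟨Nκ, hNκ⟩ := eventually_atTop.1 (eventually_forall_lt_of_mul_le hlam_top hbound hlevel)
  refine ⟨Nκ, fun N hN x hx => ?_⟩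
  have hlo_lt : αlo (nndist (rN N x) rd) < αlo κ.toNNReal := by
    exact_mod_cast (hT _).1.trans_lt (hNκ N hN x hx)
  exact Real.lt_toNNReal_iff_coe_lt.1 (hlo_mono.lt_iff_lt.1 hlo_lt)

/-- Uniform convergence of the optimal artificial reference: if the offset cost is
sandwiched by `K∞`-functions of the distance to `r_d`, the scaling satisfies
`λ(N) ≥ N`, and the value function is uniformly bounded on `S`, then
`r_N(x) → r_d` uniformly on `S` as `N → ∞`. -/
theorem uniform_convergence_artificial_reference {α β : Type*} [MetricSpace β]
    (rd : β)
    (αlo αup : ℝ≥0 → ℝ≥0)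
    (hlo_mono : StrictMono αlo) (hlo_cont : Continuous αlo)
    (hlo_bij : Function.Bijective αlo)
    (hup_mono : StrictMono αup) (hup_cont : Continuous αup)
    (hup_bij : Function.Bijective αup)
    (hle : ∀ s, αlo s ≤ αup s)
    (T : β → ℝ)
    (hT : ∀ r, (αlo (nndist r rd) : ℝ) ≤ T r ∧ T r ≤ (αup (nndist r rd) : ℝ))
    (lam : ℕ → ℝ) (hlam_nn : ∀ N, 0 ≤ lam N) (hlam : ∀ N : ℕ, (N : ℝ) ≤ lam N)
    (S : Set α) (J V : ℕ → α → ℝ) (rN : ℕ → α → β)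
    (Nbar : ℕ) (W : ℝ)
    (hJ : ∀ N x, 0 ≤ J N x)
    (hV : ∀ N x, V N x = J N x + lam N * T (rN N x))
    (hW : ∀ N, Nbar ≤ N → ∀ x ∈ S, V N x ≤ W) :
    ∀ κ > (0:ℝ), ∃ Nκ : ℕ, ∀ N, Nκ ≤ N → ∀ x ∈ S, dist (rN N x) rd < κ :=
  uniform_convergence_artificial_reference_general rd αlo αup hlo_mono T hT lam hlam S J V rN Nbar W
    hJ hV hW
end

section
/- Let λ : ℕ → ℝ≥0 with λ(N) ≥ N, let ℓ(k) ≥ 0 and T ≥ 0, and suppose the combined cost satisfies ∑_{k=0}^{N-1} ℓ(k) + λ(N)·T ≤ Γ, where additionally ℓ(k) + T ≥ ρ(d(k)) for all k ∈ {0,…,N-1}, with ρ a strictly increasing continuous bijection of ℝ≥0 and d(k) ≥ 0. Then for any P ≥ 1, the set {k ∈ {0,…,N-1} : d(k) ≥ ρ⁻¹(Γ/P)} has at most P elements. -/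
open NNReal

open Classical in
/-- Turnpike property (Lemma 5): if `∑_{k<N} ℓ(k) + λ(N) T ≤ Γ` with `λ(N) ≥ N` and
`ℓ(k) + T ≥ ρ(d(k))` for a `K∞`-function `ρ`, then for any `P ≥ 1` the set
`{k < N : d(k) ≥ ρ⁻¹(Γ/P)}` has at most `P` elements. -/
theorem turnpike_property (lam : ℕ → ℝ) (hlam_nn : ∀ N, 0 ≤ lam N)
    (hlam : ∀ N : ℕ, (N : ℝ) ≤ lam N)
    (N : ℕ) (ℓ : ℕ → ℝ) (T : ℝ) (hℓ : ∀ k, 0 ≤ ℓ k) (hT : 0 ≤ T)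
    (Γ : ℝ≥0) (hΓ : 0 < Γ)
    (hcost : ∑ k ∈ Finset.range N, ℓ k + lam N * T ≤ (Γ : ℝ))
    (ρ ρinv : ℝ≥0 → ℝ≥0)
    (hρ_mono : StrictMono ρ) (hρ_cont : Continuous ρ) (hρ_bij : Function.Bijective ρ)
    (hinv₁ : Function.LeftInverse ρinv ρ) (hinv₂ : Function.RightInverse ρinv ρ)
    (d : ℕ → ℝ≥0)
    (hρd : ∀ k < N, (ρ (d k) : ℝ) ≤ ℓ k + T)
    (P : ℕ) (hP : 1 ≤ P) :
    ((Finset.range N).filter (fun k => ρinv (Γ / P) ≤ d k)).card ≤ P := by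
  set S := (Finset.range N).filter (fun k => ρinv (Γ / P) ≤ d k) with hS
  have hPpos : (0 : ℝ) < P := by exact_mod_cast Nat.lt_of_lt_of_le Nat.zero_lt_one hP
  have hq : (0 : ℝ) < (Γ : ℝ) / P := div_pos (by exact_mod_cast hΓ) hPpos
  -- each element of S contributes at least Γ/P
  have hkey : ∀ k ∈ S, (Γ : ℝ) / P ≤ ℓ k + T := by
    intro k hk
    rw [hS, Finset.mem_filter, Finset.mem_range] at hk
    obtain ⟨hkN, hkd⟩ := hk
    have h1 : ρ (ρinv (Γ / P)) ≤ ρ (d k) := hρ_mono.monotone hkd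
    rw [hinv₂] at h1
    have h2 : ((Γ / P : ℝ≥0) : ℝ) ≤ (ρ (d k) : ℝ) := by exact_mod_cast h1
    have h3 : ((Γ / P : ℝ≥0) : ℝ) = (Γ : ℝ) / P := by
      push_cast; ring
    linarith [hρd k hkN, h2, h3.symm.le]
  -- sum over all k < N of (ℓ k + T) is ≤ Γ
  have hsum : ∑ k ∈ Finset.range N, (ℓ k + T) ≤ (Γ : ℝ) := by
    rw [Finset.sum_add_distrib, Finset.sum_const, Finset.card_range, nsmul_eq_mul]
    have : (N : ℝ) * T ≤ lam N * T := mul_le_mul_of_nonneg_right (hlam N) hT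
    linarith
  have hsub : S ⊆ Finset.range N := Finset.filter_subset _ _
  have h4 : (S.card : ℝ) * ((Γ : ℝ) / P) ≤ (Γ : ℝ) := by
    calc (S.card : ℝ) * ((Γ : ℝ) / P) = ∑ _k ∈ S, (Γ : ℝ) / P := by
          rw [Finset.sum_const, nsmul_eq_mul]
      _ ≤ ∑ k ∈ S, (ℓ k + T) := Finset.sum_le_sum hkey
      _ ≤ ∑ k ∈ Finset.range N, (ℓ k + T) :=
          Finset.sum_le_sum_of_subset_of_nonneg hsub
            (fun i _ _ => add_nonneg (hℓ i) hT)
      _ ≤ (Γ : ℝ) := hsum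
  have h5 : (S.card : ℝ) ≤ P := by
    have := (le_div_iff₀ hq).mpr h4
    calc (S.card : ℝ) ≤ (Γ : ℝ) / ((Γ : ℝ) / P) := this
      _ = P := by
          have hΓ' : (Γ : ℝ) ≠ 0 := ne_of_gt (by exact_mod_cast hΓ)
          field_simp
  exact_mod_cast h5
end
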